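/- Let A, B, C, D be finite-valued random variables. If I(B; D | C, A) = 0 and I(A; C) ≥ I(A; C | B), then I(A; (C, D)) ≥ I(A; (C, D) | B). -/

import Mathlib

open scoped BigOperators

noncomputable section

/-- Probability that the random variable `X` takes the value `a`,
with respect to the probability mass function `p` on the finite sample space `Ω`. -/
def prob {Ω : Type*} [Fintype Ω] {α : Type*} [DecidableEq α]
    (p : Ω → ℝ) (X : Ω → α) (a : α) : ℝ :=
  ∑ ω, if X ω = a then p ω else 0

/-- Shannon entropy (base 2) of the random variable `X`. -/
def ent {Ω : Type*} [Fintype Ω] {α : Type*} [Fintype α] [DecidableEq α]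
    (p : Ω → ℝ) (X : Ω → α) : ℝ :=
  -∑ a, prob p X a * Real.logb 2 (prob p X a)

/-- Conditional entropy `H(X|Y)`. -/
def condEnt {Ω : Type*} [Fintype Ω] {α β : Type*} [Fintype α] [DecidableEq α]
    [Fintype β] [DecidableEq β] (p : Ω → ℝ) (X : Ω → α) (Y : Ω → β) : ℝ :=
  ent p (fun ω => (X ω, Y ω)) - ent p Y

/-- Mutual information `I(X;Y)`. -/
def mi {Ω : Type*} [Fintype Ω] {α β : Type*} [Fintype α] [DecidableEq α]
    [Fintype β] [DecidableEq β] (p : Ω → ℝ) (X : Ω → α) (Y : Ω → β) : ℝ :=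
  ent p X + ent p Y - ent p (fun ω => (X ω, Y ω))

/-- Conditional mutual information `I(X;Y|Z)`. -/
def cmi {Ω : Type*} [Fintype Ω] {α β γ : Type*} [Fintype α] [DecidableEq α]
    [Fintype β] [DecidableEq β] [Fintype γ] [DecidableEq γ]
    (p : Ω → ℝ) (X : Ω → α) (Y : Ω → β) (Z : Ω → γ) : ℝ :=
  ent p (fun ω => (X ω, Z ω)) + ent p (fun ω => (Y ω, Z ω))
    - ent p (fun ω => (X ω, Y ω, Z ω)) - ent p Z

/-!
By the chain rule, `I(A; C, D) - I(A; C, D | B)` equals `I(A; C) - I(A; C | B)` plus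
`I(A; D | C) - I(A; D | C, B)`, and the symmetry of interaction information turns the latter
into `I(B; D | C) - I(B; D | C, A)`. The first difference is nonnegative by hypothesis,
`I(B; D | C, A) = 0`, and `I(B; D | C) ≥ 0`: conditional mutual information is nonnegative by
`log x ≤ x - 1`, applied on each fibre of the conditioning variable.
-/

open Real Finset Function

section Probability

variable {Ω α β γ : Type*} [Fintype Ω] [DecidableEq α] [DecidableEq β] [DecidableEq γ]
  (p : Ω → ℝ)

lemma prob_nonneg (hp : ∀ ω, 0 ≤ p ω) (X : Ω → α) (a : α) : 0 ≤ prob p X a :=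
  sum_nonneg fun ω _ => by split <;> simp [hp ω]

lemma prob_eq_sum_prob_pair [Fintype α] (X : Ω → α) (Y : Ω → β) (b : β) :
    prob p Y b = ∑ a, prob p (fun ω => (X ω, Y ω)) (a, b) := by
  unfold prob
  rw [sum_comm]
  refine sum_congr rfl fun ω _ => ?_
  simp [Prod.ext_iff, ite_and, sum_ite_eq]

lemma prob_pair_eq_sum_prob_triple [Fintype β] (X : Ω → α) (Y : Ω → β) (Z : Ω → γ)
    (a : α) (c : γ) :
    prob p (fun ω => (X ω, Z ω)) (a, c)
      = ∑ b, prob p (fun ω => (X ω, Y ω, Z ω)) (a, b, c) := by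
  unfold prob
  rw [sum_comm]
  refine sum_congr rfl fun ω _ => ?_
  simp [Prod.ext_iff, ite_and, sum_ite_eq]

lemma prob_comp_injective {f : α → β} (hf : Injective f) (X : Ω → α) (a : α) :
    prob p (fun ω => f (X ω)) (f a) = prob p X a := by
  simp only [prob, hf.eq_iff]

lemma ent_eq_sum_negMulLog [Fintype α] (X : Ω → α) :
    ent p X = (∑ a, negMulLog (prob p X a)) / log 2 := by
  simp only [ent, logb, negMulLog, sum_div]
  rw [← sum_neg_distrib]
  exact sum_congr rfl fun a _ => by ring

lemma ent_comp_injective [Fintype α] [Fintype β] {f : α → β} (hf : Injective f)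
    (X : Ω → α) : ent p (fun ω => f (X ω)) = ent p X := by
  have hzero : ∀ b ∉ univ.image f, prob p (fun ω => f (X ω)) b = 0 := fun b hb =>
    sum_eq_zero fun ω _ => if_neg fun h => hb (mem_image.2 ⟨X ω, mem_univ _, h⟩)
  simp only [ent_eq_sum_negMulLog]
  rw [← sum_subset (subset_univ _) fun b _ hb => by rw [hzero b hb, negMulLog_zero],
    sum_image hf.injOn]
  simp only [prob_comp_injective p hf]

end Probability

lemma mul_log_add_log_sub_log_sub_log_le {r s t u : ℝ} (hr : 0 ≤ r) (hs : r ≤ s)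
    (ht : r ≤ t) (hu : r ≤ u) : r * (log s + log t - log r - log u) ≤ s * t / u - r := by
  rcases hr.eq_or_lt with rfl | hr
  · simp only [zero_mul, sub_zero]
    exact div_nonneg (mul_nonneg hs ht) hu
  have hs := hr.trans_le hs
  have ht := hr.trans_le ht
  have hu := hr.trans_le hu
  have hlog : log s + log t - log r - log u = log (s * t / (r * u)) := by
    rw [log_div (by positivity) (by positivity), log_mul hs.ne' ht.ne', log_mul hr.ne' hu.ne']
    ring
  calc r * (log s + log t - log r - log u) ≤ r * (s * t / (r * u) - 1) := by
        rw [hlog]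
        exact mul_le_mul_of_nonneg_left (log_le_sub_one_of_pos (by positivity)) hr.le
    _ = s * t / u - r := by field_simp

/-- Subadditivity of entropy, for a nonnegative mass function on `α × β` of any total mass. -/
lemma negMulLog_sum_add_sum_negMulLog_le {α β : Type*} [Fintype α] [Fintype β]
    (r : α → β → ℝ) (hr : ∀ a b, 0 ≤ r a b) :
    negMulLog (∑ a, ∑ b, r a b) + ∑ a, ∑ b, negMulLog (r a b)
      ≤ ∑ a, negMulLog (∑ b, r a b) + ∑ b, negMulLog (∑ a, r a b) := by
  set s : α → ℝ := fun a => ∑ b, r a b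
  set t : β → ℝ := fun b => ∑ a, r a b
  set u : ℝ := ∑ a, s a
  have hsu : ∑ b, t b = u := sum_comm
  have hrs : ∀ a b, r a b ≤ s a := fun a b =>
    single_le_sum (fun b _ => hr a b) (mem_univ b)
  have hrt : ∀ a b, r a b ≤ t b := fun a b =>
    single_le_sum (fun a _ => hr a b) (mem_univ a)
  have hru : ∀ a b, r a b ≤ u := fun a b =>
    (hrs a b).trans (single_le_sum (fun a _ => sum_nonneg fun b _ => hr a b) (mem_univ a))
  have hmass : ∑ a, ∑ b, s a * t b / u = u := by
    simp only [mul_div_assoc, ← mul_sum, ← sum_div, ← sum_mul, hsu]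
    rcases eq_or_ne u 0 with hu | hu
    · simp [hu]
    · field_simp
      rfl
  have key : ∑ a, ∑ b, r a b * (log (s a) + log (t b) - log (r a b) - log u) ≤ 0 := by
    calc ∑ a, ∑ b, r a b * (log (s a) + log (t b) - log (r a b) - log u)
        ≤ ∑ a, ∑ b, (s a * t b / u - r a b) := by
          gcongr with a _ b _
          exact mul_log_add_log_sub_log_sub_log_le (hr a b) (hrs a b) (hrt a b) (hru a b)
      _ = 0 := by simp only [sum_sub_distrib, hmass]; exact sub_self u
  have hs : ∑ a, negMulLog (s a) = -∑ a, ∑ b, r a b * log (s a) := by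
    simp only [negMulLog, neg_mul, sum_neg_distrib, s, sum_mul]
  have ht : ∑ b, negMulLog (t b) = -∑ a, ∑ b, r a b * log (t b) := by
    simp only [negMulLog, neg_mul, sum_neg_distrib, t, sum_mul]
    rw [sum_comm]
  have hu : negMulLog u = -∑ a, ∑ b, r a b * log u := by
    simp only [negMulLog, neg_mul, u, s, sum_mul]
  have hr : ∑ a, ∑ b, negMulLog (r a b) = -∑ a, ∑ b, r a b * log (r a b) := by
    simp only [negMulLog, neg_mul, sum_neg_distrib]
  simp only [mul_sub, mul_add, sum_add_distrib, sum_sub_distrib] at key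
  linarith

lemma cmi_nonneg {Ω α β γ : Type*} [Fintype Ω] [Fintype α] [DecidableEq α]
    [Fintype β] [DecidableEq β] [Fintype γ] [DecidableEq γ]
    (p : Ω → ℝ) (hp : ∀ ω, 0 ≤ p ω) (X : Ω → α) (Y : Ω → β) (Z : Ω → γ) :
    0 ≤ cmi p X Y Z := by
  set r : α → β → γ → ℝ := fun a b c => prob p (fun ω => (X ω, Y ω, Z ω)) (a, b, c)
  have hXZ : ∑ ac : α × γ, negMulLog (prob p (fun ω => (X ω, Z ω)) ac)
      = ∑ c, ∑ a, negMulLog (∑ b, r a b c) := by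
    simp only [Fintype.sum_prod_type_right, prob_pair_eq_sum_prob_triple p X Y Z, r]
  have hYZ : ∑ bc : β × γ, negMulLog (prob p (fun ω => (Y ω, Z ω)) bc)
      = ∑ c, ∑ b, negMulLog (∑ a, r a b c) := by
    simp only [Fintype.sum_prod_type_right, prob_eq_sum_prob_pair p X (fun ω => (Y ω, Z ω)), r]
  have hXYZ : ∑ abc : α × β × γ, negMulLog (prob p (fun ω => (X ω, Y ω, Z ω)) abc)
      = ∑ c, ∑ a, ∑ b, negMulLog (r a b c) := by
    rw [Fintype.sum_prod_type_right, Fintype.sum_prod_type_right]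
    exact sum_congr rfl fun c _ => sum_comm
  have hZ : ∑ c, negMulLog (prob p Z c) = ∑ c, negMulLog (∑ a, ∑ b, r a b c) := by
    simp only [prob_eq_sum_prob_pair p X Z, prob_pair_eq_sum_prob_triple p X Y Z, r]
  have key := sum_le_sum fun c (_ : c ∈ univ) =>
    negMulLog_sum_add_sum_negMulLog_le (fun a b => r a b c) fun a b => prob_nonneg p hp _ _
  simp only [sum_add_distrib] at key
  simp only [cmi, ent_eq_sum_negMulLog, hXZ, hYZ, hXYZ, hZ]
  rw [← add_div, ← sub_div, ← sub_div]
  exact div_nonneg (by linarith) (log_nonneg one_le_two)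

lemma mi_prod_sub_cmi_prod {Ω α β γ δ : Type*} [Fintype Ω] [Fintype α] [DecidableEq α]
    [Fintype β] [DecidableEq β] [Fintype γ] [DecidableEq γ] [Fintype δ] [DecidableEq δ]
    (p : Ω → ℝ) (A : Ω → α) (B : Ω → β) (C : Ω → γ) (D : Ω → δ) :
    mi p A (fun ω => (C ω, D ω)) - cmi p A (fun ω => (C ω, D ω)) B
      = mi p A C - cmi p A C B + cmi p B D C - cmi p B D (fun ω => (C ω, A ω)) := by
  have e₁ : ent p (fun ω => (D ω, C ω)) = ent p (fun ω => (C ω, D ω)) :=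
    ent_comp_injective p Prod.swap_injective fun ω => (C ω, D ω)
  have e₂ : ent p (fun ω => (C ω, A ω)) = ent p (fun ω => (A ω, C ω)) :=
    ent_comp_injective p Prod.swap_injective fun ω => (A ω, C ω)
  have e₃ : ent p (fun ω => (B ω, C ω)) = ent p (fun ω => (C ω, B ω)) :=
    ent_comp_injective p Prod.swap_injective fun ω => (C ω, B ω)
  have e₄ : ent p (fun ω => (D ω, C ω, A ω)) = ent p (fun ω => (A ω, C ω, D ω)) :=
    ent_comp_injective p (f := fun x : α × γ × δ => (x.2.2, x.2.1, x.1))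
      (fun x y h => by simp_all [Prod.ext_iff]) (fun ω => (A ω, C ω, D ω))
  have e₅ : ent p (fun ω => (B ω, D ω, C ω)) = ent p (fun ω => ((C ω, D ω), B ω)) :=
    ent_comp_injective p (f := fun x : (γ × δ) × β => (x.2, x.1.2, x.1.1))
      (fun x y h => by simp_all [Prod.ext_iff]) (fun ω => ((C ω, D ω), B ω))
  have e₆ : ent p (fun ω => (B ω, D ω, C ω, A ω))
      = ent p (fun ω => (A ω, (C ω, D ω), B ω)) :=
    ent_comp_injective p (f := fun x : α × (γ × δ) × β => (x.2.2, x.2.1.2, x.2.1.1, x.1))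
      (fun x y h => by simp_all [Prod.ext_iff]) (fun ω => (A ω, (C ω, D ω), B ω))
  have e₇ : ent p (fun ω => (B ω, C ω, A ω)) = ent p (fun ω => (A ω, C ω, B ω)) :=
    ent_comp_injective p (f := fun x : α × γ × β => (x.2.2, x.2.1, x.1))
      (fun x y h => by simp_all [Prod.ext_iff]) (fun ω => (A ω, C ω, B ω))
  simp only [mi, cmi]
  linarith

theorem stmt5_general {Ω : Type*} [Fintype Ω] {α β γ δ : Type*}
    [Fintype α] [DecidableEq α] [Fintype β] [DecidableEq β]
    [Fintype γ] [DecidableEq γ] [Fintype δ] [DecidableEq δ]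
    (p : Ω → ℝ) (hp : ∀ ω, 0 ≤ p ω)
    (A : Ω → α) (B : Ω → β) (C : Ω → γ) (D : Ω → δ)
    (h1 : cmi p B D (fun ω => (C ω, A ω)) = 0)
    (h2 : mi p A C ≥ cmi p A C B) :
    mi p A (fun ω => (C ω, D ω)) ≥ cmi p A (fun ω => (C ω, D ω)) B := by
  have hBD := cmi_nonneg p hp B D C
  have hsplit := mi_prod_sub_cmi_prod p A B C D
  linarith

theorem stmt5 {Ω : Type*} [Fintype Ω] {α β γ δ : Type*}
    [Fintype α] [DecidableEq α] [Fintype β] [DecidableEq β]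
    [Fintype γ] [DecidableEq γ] [Fintype δ] [DecidableEq δ]
    (p : Ω → ℝ) (hp : ∀ ω, 0 ≤ p ω) (hsum : ∑ ω, p ω = 1)
    (A : Ω → α) (B : Ω → β) (C : Ω → γ) (D : Ω → δ)
    (h1 : cmi p B D (fun ω => (C ω, A ω)) = 0)
    (h2 : mi p A C ≥ cmi p A C B) :
    mi p A (fun ω => (C ω, D ω)) ≥ cmi p A (fun ω => (C ω, D ω)) B :=
  stmt5_general p hp A B C D h1 h2
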